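/- Let x be fixed with |x| = r < R, and for ψ ∈ [0, π] let ω(ψ) = l(ψ)/q(ψ) where q(ψ) = |x−y|, l(ψ) = |x−y*| for y ∈ S^k(R) with ∠Oxy = ψ. Then dω/dψ = (l/q) · (4 r sin ψ)/(l + q). -/

import Mathlib

open Real

/-!
Write `s(ψ) = √(R² − r² sin² ψ)`, so that `q = s + r cos ψ`, `l = s − r cos ψ`, `l + q = 2s`
and `|r cos ψ| < s`. Differentiating `s² = R² − r² sin² ψ` gives `s' = −r² sin ψ cos ψ / s`,
hence `q' = −(r sin ψ / s) q` and `l' = (r sin ψ / s) l`. The logarithmic derivative of `l/q`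
is therefore `2 r sin ψ / s = 4 r sin ψ / (l + q)`.
-/

theorem HasDerivAt.div_of_logDeriv {𝕜 : Type*} [NontriviallyNormedField 𝕜] {f g : 𝕜 → 𝕜}
    {x u v : 𝕜} (hf : HasDerivAt f (f x * u) x) (hg : HasDerivAt g (g x * v) x)
    (hgx : g x ≠ 0) : HasDerivAt (fun y => f y / g y) (f x / g x * (u - v)) x := by
  refine (hf.div hg hgx).congr_deriv ?_
  field_simp

section Chord

variable {r R : ℝ}

theorem sq_mul_sin_sq_lt (h : r ^ 2 < R ^ 2) (ψ : ℝ) : r ^ 2 * sin ψ ^ 2 < R ^ 2 := by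
  nlinarith [sin_sq_le_one ψ, sq_nonneg r]

theorem mul_cos_add_sqrt_pos (h : r ^ 2 < R ^ 2) (ψ : ℝ) :
    0 < r * cos ψ + √(R ^ 2 - r ^ 2 * sin ψ ^ 2) := by
  have habs : |r * cos ψ| < √(R ^ 2 - r ^ 2 * sin ψ ^ 2) := by
    rw [Real.lt_sqrt (abs_nonneg _), sq_abs]
    nlinarith [sin_sq_add_cos_sq ψ]
  linarith [neg_abs_le (r * cos ψ)]

theorem hasDerivAt_sqrt_sub_sq_mul_sin_sq {ψ : ℝ} (h : r ^ 2 * sin ψ ^ 2 < R ^ 2) :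
    HasDerivAt (fun t => √(R ^ 2 - r ^ 2 * sin t ^ 2))
      (-(r ^ 2 * sin ψ * cos ψ) / √(R ^ 2 - r ^ 2 * sin ψ ^ 2)) ψ := by
  have hinner : HasDerivAt (fun t => R ^ 2 - r ^ 2 * sin t ^ 2)
      (-(r ^ 2 * (2 * sin ψ * cos ψ))) ψ := by
    simpa [mul_comm, mul_left_comm] using
      (((hasDerivAt_sin ψ).fun_pow 2).const_mul (r ^ 2)).const_sub (R ^ 2)
  refine (hinner.sqrt (sub_pos.mpr h).ne').congr_deriv ?_
  ring

theorem hasDerivAt_mul_cos_add_sqrt {ψ : ℝ} (h : r ^ 2 * sin ψ ^ 2 < R ^ 2) :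
    HasDerivAt (fun t => r * cos t + √(R ^ 2 - r ^ 2 * sin t ^ 2))
      ((r * cos ψ + √(R ^ 2 - r ^ 2 * sin ψ ^ 2)) *
        -(r * sin ψ / √(R ^ 2 - r ^ 2 * sin ψ ^ 2))) ψ := by
  have hs : √(R ^ 2 - r ^ 2 * sin ψ ^ 2) ≠ 0 := (sqrt_pos.mpr (sub_pos.mpr h)).ne'
  refine (((hasDerivAt_cos ψ).const_mul r).add
    (hasDerivAt_sqrt_sub_sq_mul_sin_sq h)).congr_deriv ?_
  field_simp
  ring

theorem hasDerivAt_sqrt_sub_mul_cos {ψ : ℝ} (h : r ^ 2 * sin ψ ^ 2 < R ^ 2) :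
    HasDerivAt (fun t => √(R ^ 2 - r ^ 2 * sin t ^ 2) - r * cos t)
      ((√(R ^ 2 - r ^ 2 * sin ψ ^ 2) - r * cos ψ) *
        (r * sin ψ / √(R ^ 2 - r ^ 2 * sin ψ ^ 2))) ψ := by
  have hs : √(R ^ 2 - r ^ 2 * sin ψ ^ 2) ≠ 0 := (sqrt_pos.mpr (sub_pos.mpr h)).ne'
  refine ((hasDerivAt_sqrt_sub_sq_mul_sin_sq h).sub
    ((hasDerivAt_cos ψ).const_mul r)).congr_deriv ?_
  field_simp
  ring

end Chord

/-- Differentiation of `ω = l/q` with respect to `ψ`: with `0 < r < R` and the chord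
distances `q(ψ) = r cos ψ + √(R² − r² sin² ψ)`, `l(ψ) = √(R² − r² sin² ψ) − r cos ψ`
from a point at distance `r` from the origin to the sphere of radius `R` along the
direction at angle `ψ`, the ratio `ω = l/q` satisfies
`dω/dψ = (l/q) · 4 r sin ψ / (l+q)`. -/
theorem stmt9 (r R : ℝ) (hr : 0 < r) (hrR : r < R) :
    ∀ ψ ∈ Set.Ioo 0 π,
      let q : ℝ → ℝ := fun ψ => r * Real.cos ψ + Real.sqrt (R^2 - r^2 * Real.sin ψ^2)
      let l : ℝ → ℝ := fun ψ => Real.sqrt (R^2 - r^2 * Real.sin ψ^2) - r * Real.cos ψ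
      HasDerivAt (fun ψ => l ψ / q ψ)
        (l ψ / q ψ * (4 * r * Real.sin ψ) / (l ψ + q ψ)) ψ := by
  intro ψ _ q l
  have hrR2 : r ^ 2 < R ^ 2 := by nlinarith
  have hsin := sq_mul_sin_sq_lt hrR2 ψ
  have hs : √(R ^ 2 - r ^ 2 * sin ψ ^ 2) ≠ 0 := (sqrt_pos.mpr (sub_pos.mpr hsin)).ne'
  refine ((hasDerivAt_sqrt_sub_mul_cos hsin).div_of_logDeriv
    (hasDerivAt_mul_cos_add_sqrt hsin) (mul_cos_add_sqrt_pos hrR2 ψ).ne').congr_deriv ?_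
  have hlq : l ψ + q ψ = 2 * √(R ^ 2 - r ^ 2 * sin ψ ^ 2) := by simp only [l, q]; ring
  rw [hlq]
  field_simp
  ring
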